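/- Let q be a prime power and let C be a k-dimensional linear code of length n over F_{q²} with generator matrix G. Let Ḡ denote the matrix obtained by applying the conjugation x ↦ x^q entrywise to G. Then C is a Hermitian LCD code (i.e. C ∩ C^{⊥_H} = {0}) if and only if the k×k matrix GḠᵀ is nonsingular. -/
import Mathlib


/-- The Hermitian dual of a linear code `C ⊆ F^n`, where `F = F_{q²}` and the
conjugation is `x ↦ x^q`. -/
def hermitianDualCode {F : Type*} [Field F] (q : ℕ) {n : ℕ}
    (C : Submodule F (Fin n → F)) : Submodule F (Fin n → F) where
  carrier := {x | ∀ c ∈ C, ∑ i, x i * (c i) ^ q = 0}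
  add_mem' := by
    intro x y hx hy c hc
    simp [add_mul, Finset.sum_add_distrib, hx c hc, hy c hc]
  zero_mem' := by
    intro c hc
    simp
  smul_mem' := by
    intro a x hx c hc
    simp [smul_eq_mul, mul_assoc, ← Finset.mul_sum, hx c hc]

/-- A code `C` over `F_{q²}` with generator matrix `G` is Hermitian LCD if and
only if `G * Ḡᵀ` is nonsingular, where `Ḡ` is obtained from `G` by applying the
conjugation `x ↦ x^q` entrywise. -/
theorem hermitian_lcd_iff_det_mul_conj_transpose_ne_zero {F : Type*} [Field F]
    [Fintype F] {q : ℕ} (hF : Fintype.card F = q ^ 2)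
    {n k : ℕ} (C : Submodule F (Fin n → F))
    (hk : Module.finrank F C = k)
    (G : Matrix (Fin k) (Fin n) F)
    (hGli : LinearIndependent F (fun i : Fin k => G i))
    (hGspan : Submodule.span F (Set.range fun i : Fin k => G i) = C) :
    C ⊓ hermitianDualCode q C = ⊥ ↔
      (G * (G.map (fun x => x ^ q)).transpose).det ≠ 0 := by
  classical
  set M := G * (G.map (fun x => x ^ q)).transpose with hM
  haveI : CharP F (ringChar F) := ringChar.charP F
  obtain ⟨d, hp, hcard⟩ := FiniteField.card F (ringChar F)
  obtain ⟨m, hm, hqm⟩ := (Nat.dvd_prime_pow hp).mp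
    (show q ∣ (ringChar F) ^ (d : ℕ) by
      rw [← hcard, hF]; exact dvd_pow_self q two_ne_zero)
  haveI : ExpChar F (ringChar F) := ExpChar.prime hp
  have hfrob : ∀ (f : Fin k → F), (∑ i, f i) ^ q = ∑ i, (f i) ^ q := by
    intro f; rw [hqm]; exact sum_pow_char_pow (ringChar F) m _ f
  have hrow : ∀ i, G i ∈ C := fun i => hGspan ▸ Submodule.subset_span ⟨i, rfl⟩
  have hsum : ∀ v : Fin k → F, ∑ i, v i • G i = Matrix.vecMul v G := by
    intro v; funext j
    simp [Matrix.vecMul, dotProduct, Finset.sum_apply]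
  have key : ∀ (v : Fin k → F) (l : Fin k),
      ∑ j, (Matrix.vecMul v G) j * (G l j) ^ q = Matrix.vecMul v M l := by
    intro v l
    simp only [hM, Matrix.vecMul, dotProduct, Matrix.mul_apply,
      Matrix.transpose_apply, Matrix.map_apply, Finset.sum_mul, Finset.mul_sum]
    rw [Finset.sum_comm]
    exact Finset.sum_congr rfl fun i _ => Finset.sum_congr rfl fun j _ => by ring
  have hvecC : ∀ v : Fin k → F, Matrix.vecMul v G ∈ C := by
    intro v
    rw [← hGspan, Submodule.mem_span_range_iff_exists_fun]
    exact ⟨v, hsum v⟩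
  have hinj : ∀ v : Fin k → F, Matrix.vecMul v G = 0 → v = 0 := by
    intro v hv
    funext i
    exact Fintype.linearIndependent_iff.mp hGli v (by rw [hsum v, hv]) i
  constructor
  · intro hbot hdet
    obtain ⟨v, hv0, hvM⟩ := Matrix.exists_vecMul_eq_zero_iff.mpr hdet
    have hxdual : Matrix.vecMul v G ∈ hermitianDualCode q C := by
      intro c hc
      rw [← hGspan, Submodule.mem_span_range_iff_exists_fun] at hc
      obtain ⟨w, rfl⟩ := hc
      have hexp : ∀ j, ((∑ i, w i • G i) j) ^ q = ∑ i, (w i) ^ q * (G i j) ^ q := by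
        intro j
        rw [Finset.sum_apply, hfrob]
        exact Finset.sum_congr rfl fun i _ => by simp [mul_pow]
      simp only [hexp, Finset.mul_sum]
      rw [Finset.sum_comm]
      have h2 : ∀ i : Fin k,
          ∑ j, Matrix.vecMul v G j * ((w i) ^ q * (G i j) ^ q)
            = (w i) ^ q * Matrix.vecMul v M i := by
        intro i
        rw [← key v i, Finset.mul_sum]
        exact Finset.sum_congr rfl fun j _ => by ring
      simp only [h2, hvM, Pi.zero_apply, mul_zero, Finset.sum_const_zero]
    have hx0 : Matrix.vecMul v G = 0 := by
      have := hbot ▸ Submodule.mem_inf.mpr ⟨hvecC v, hxdual⟩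
      simpa using this
    exact hv0 (hinj v hx0)
  · intro hdet
    rw [eq_bot_iff]
    intro x hx
    obtain ⟨hxC, hxd⟩ := Submodule.mem_inf.mp hx
    obtain ⟨v, rfl⟩ : ∃ v, Matrix.vecMul v G = x := by
      rw [← hGspan, Submodule.mem_span_range_iff_exists_fun] at hxC
      obtain ⟨v, hv⟩ := hxC
      exact ⟨v, (hsum v).symm.trans hv⟩
    have hvM : Matrix.vecMul v M = 0 := by
      funext l
      rw [Pi.zero_apply, ← key v l]
      exact hxd (G l) (hrow l)
    have hv0 : v = 0 := by
      by_contra hv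
      exact hdet (Matrix.exists_vecMul_eq_zero_iff.mp ⟨v, hv, hvM⟩)
    simp [hv0]
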